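/- Let (E, D(E)) be a symmetric bilinear form on a space of functions such that E(|u|) ≤ E(u) for all u (positivity preserving). If h ∈ D(E) satisfies E(h, ψ) ≥ 0 for all nonnegative ψ ∈ D(E) and E(h⁻) is finite, then E(h⁻) ≤ 0, where h⁻ = max(-h, 0) and h⁺ = max(h, 0); more precisely 0 ≤ E(h⁻) ≤ E(h⁺, h⁻) ≤ 0, hence E(h⁻) = 0. -/

import Mathlib

/-!
Write `h = h⁺ - h⁻` and `|h| = h⁺ + h⁻`. For a symmetric bilinear form the two quadratic values
differ by the cross term, `E(h⁺ + h⁻) - E(h⁺ - h⁻) = 4 E(h⁺, h⁻)`, so positivity preservation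
`E(|h|) ≤ E(h)` forces `E(h⁺, h⁻) ≤ 0`. Testing the supersolution inequality against `ψ = h⁻`
gives `0 ≤ E(h, h⁻) = E(h⁺, h⁻) - E(h⁻)`, which sandwiches `E(h⁻)` between `0` and `0`.
-/

namespace LinearMap.BilinForm

variable {R M : Type*} [CommRing R] [AddCommGroup M] [Module R M]

def mkOfSymm (a : M → M → R) (hsymm : ∀ u v, a u v = a v u)
    (hadd : ∀ u v w, a (u + v) w = a u w + a v w) (hsmul : ∀ (c : R) u v, a (c • u) v = c * a u v) :
    LinearMap.BilinForm R M :=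
  LinearMap.mk₂ R a hadd (fun c u v => by rw [hsmul, smul_eq_mul])
    (fun u v w => by rw [hsymm, hadd, hsymm v, hsymm w])
    (fun c u v => by rw [hsymm, hsmul, hsymm, smul_eq_mul])

lemma isSymm_mkOfSymm (a : M → M → R) (hsymm hadd hsmul) :
    (mkOfSymm a hsymm hadd hsmul).IsSymm :=
  ⟨hsymm⟩

lemma apply_add_self_sub_apply_sub_self {B : LinearMap.BilinForm R M} (hB : B.IsSymm) (u v : M) :
    B (u + v) (u + v) - B (u - v) (u - v) = 4 * B u v := by
  simp only [map_add, map_sub, LinearMap.add_apply, LinearMap.sub_apply, hB.eq v u]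
  ring

variable [Lattice M] [AddLeftMono M] (B : LinearMap.BilinForm R M)

lemma apply_negPart_right (u : M) : B u u⁻ = B u⁺ u⁻ - B u⁻ u⁻ := by
  rw [← map_sub₂, posPart_sub_negPart]

lemma apply_posPart_negPart_nonpos [LinearOrder R] [IsStrictOrderedRing R] (hB : B.IsSymm)
    {u : M} (hu : B |u| |u| ≤ B u u) : B u⁺ u⁻ ≤ 0 := by
  have := apply_add_self_sub_apply_sub_self hB u⁺ u⁻
  rw [posPart_add_negPart, posPart_sub_negPart] at this
  linarith

end LinearMap.BilinForm

theorem stmt7_general {α : Type*} (D : Set (α → ℝ)) (a : (α → ℝ) → (α → ℝ) → ℝ)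
    (hsymm : ∀ u v, a u v = a v u)
    (haddl : ∀ u v w, a (u + v) w = a u w + a v w)
    (hsmul : ∀ (c : ℝ) u v, a (c • u) v = c * a u v)
    (hposdef : ∀ u ∈ D, 0 ≤ a u u)
    (hpp : ∀ u ∈ D, (fun x => |u x|) ∈ D ∧ a (fun x => |u x|) (fun x => |u x|) ≤ a u u)
    (h : α → ℝ) (hh : h ∈ D)
    (hminus : (fun x => max (-h x) 0) ∈ D)
    (hweak : ∀ ψ ∈ D, (∀ x, 0 ≤ ψ x) → 0 ≤ a h ψ) :
    0 ≤ a (fun x => max (-h x) 0) (fun x => max (-h x) 0) ∧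
      a (fun x => max (-h x) 0) (fun x => max (-h x) 0) ≤
        a (fun x => max (h x) 0) (fun x => max (-h x) 0) ∧
      a (fun x => max (h x) 0) (fun x => max (-h x) 0) ≤ 0 ∧
      a (fun x => max (-h x) 0) (fun x => max (-h x) 0) = 0 := by
  set B := LinearMap.BilinForm.mkOfSymm a hsymm haddl hsmul
  change 0 ≤ B h⁻ h⁻ ∧ B h⁻ h⁻ ≤ B h⁺ h⁻ ∧ B h⁺ h⁻ ≤ 0 ∧ B h⁻ h⁻ = 0
  have hnonneg : 0 ≤ B h⁻ h⁻ := hposdef _ hminus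
  have hle : B h⁻ h⁻ ≤ B h⁺ h⁻ := by
    have : 0 ≤ B h h⁻ := hweak _ hminus fun x => le_max_right _ _
    linarith [B.apply_negPart_right h]
  have hcross : B h⁺ h⁻ ≤ 0 :=
    B.apply_posPart_negPart_nonpos (LinearMap.BilinForm.isSymm_mkOfSymm ..) (hpp h hh).2
  exact ⟨hnonneg, hle, hcross, le_antisymm (hle.trans hcross) hnonneg⟩

/-- Let `(a, D)` be a positive semi-definite symmetric bilinear form on functions that is
positivity preserving (`a |u| |u| ≤ a u u`).  If `h ∈ D` satisfies `a h ψ ≥ 0` for all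
nonnegative `ψ ∈ D`, then with `h⁺ = max(h,0)` and `h⁻ = max(-h,0)` one has
`0 ≤ a h⁻ h⁻ ≤ a h⁺ h⁻ ≤ 0`, hence `a h⁻ h⁻ = 0`. -/
theorem stmt7 {α : Type*} (D : Set (α → ℝ)) (a : (α → ℝ) → (α → ℝ) → ℝ)
    (hsymm : ∀ u v, a u v = a v u)
    (haddl : ∀ u v w, a (u + v) w = a u w + a v w)
    (hsmul : ∀ (c : ℝ) u v, a (c • u) v = c * a u v)
    (hposdef : ∀ u ∈ D, 0 ≤ a u u)
    (hpp : ∀ u ∈ D, (fun x => |u x|) ∈ D ∧ a (fun x => |u x|) (fun x => |u x|) ≤ a u u)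
    (h : α → ℝ) (hh : h ∈ D)
    (hplus : (fun x => max (h x) 0) ∈ D) (hminus : (fun x => max (-h x) 0) ∈ D)
    (hweak : ∀ ψ ∈ D, (∀ x, 0 ≤ ψ x) → 0 ≤ a h ψ) :
    0 ≤ a (fun x => max (-h x) 0) (fun x => max (-h x) 0) ∧
      a (fun x => max (-h x) 0) (fun x => max (-h x) 0) ≤
        a (fun x => max (h x) 0) (fun x => max (-h x) 0) ∧
      a (fun x => max (h x) 0) (fun x => max (-h x) 0) ≤ 0 ∧
      a (fun x => max (-h x) 0) (fun x => max (-h x) 0) = 0 :=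
  stmt7_general D a hsymm haddl hsmul hposdef hpp h hh hminus hweak
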